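/- Let X be a real Banach space, k ≥ 1, q ≥ 1, and let P : X → X be a continuous linear projection (P ∘ P = P) with ‖P‖ ≤ q and closed range Y. If X is k-self-extensible, then Y (with the norm inherited from X) is (q·k)-self-extensible. In particular, if X has the self-extension property and ‖P‖ ≤ 1, then Y has the self-extension property. -/

import Mathlib

/-- For `k ≥ 1`, a real Banach space `X` is **`k`-self-extensible** if every continuous linear
operator on a closed subspace of `X` extends to an operator on `X` of norm at most `k` times
the original norm. -/
def KSelfExt (X : Type*) [NormedAddCommGroup X] [NormedSpace ℝ X] (k : ℝ) : Prop :=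
  ∀ (Y : Submodule ℝ X), IsClosed (Y : Set X) → ∀ T : Y →L[ℝ] Y,
    ∃ S : X →L[ℝ] X, (∀ y : Y, S y = (T y : X)) ∧ ‖S‖ ≤ k * ‖T‖

/-- A real Banach space `X` has the **self-extension property** if every continuous linear
operator on a closed subspace of `X` extends to an operator on `X` with the same norm. -/
def SelfExt (X : Type*) [NormedAddCommGroup X] [NormedSpace ℝ X] : Prop :=
  ∀ (Y : Submodule ℝ X), IsClosed (Y : Set X) → ∀ T : Y →L[ℝ] Y,
    ∃ S : X →L[ℝ] X, (∀ y : Y, S y = (T y : X)) ∧ ‖S‖ = ‖T‖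

/-!
A closed subspace `Z` of `Y = range P` is also a closed subspace of `X`, so an operator `T` on `Z`
extends to some `S` on `X` with `‖S‖ ≤ k‖T‖`. Compressing back, `P ∘ S` restricted to `Y` still
extends `T` because `P` fixes `Y`, and its norm is at most `‖P‖‖S‖ ≤ qk‖T‖`. An extension never
has norm below `‖T‖`, so for `k = 1` and `‖P‖ ≤ 1` the norm is exactly `‖T‖`.
-/

section General

variable {𝕜 E : Type*} [NontriviallyNormedField 𝕜] [NormedAddCommGroup E] [NormedSpace 𝕜 E]

noncomputable def Submodule.equivMapSubtypeₗᵢ (Y : Submodule 𝕜 E) (Z : Submodule 𝕜 Y) :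
    Z ≃ₗᵢ[𝕜] Z.map Y.subtype where
  toLinearEquiv := Z.equivMapOfInjective Y.subtype Y.injective_subtype
  norm_map' _ := rfl

@[simp]
theorem Submodule.coe_equivMapSubtypeₗᵢ_apply (Y : Submodule 𝕜 E) (Z : Submodule 𝕜 Y) (z : Z) :
    (Y.equivMapSubtypeₗᵢ Z z : E) = z :=
  rfl

theorem Submodule.isClosed_map_subtype {Y : Submodule 𝕜 E} (hY : IsClosed (Y : Set E))
    {Z : Submodule 𝕜 Y} (hZ : IsClosed (Z : Set Y)) : IsClosed (Z.map Y.subtype : Set E) := by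
  rw [Submodule.map_coe]
  exact hY.isClosedEmbedding_subtypeVal.isClosedMap _ hZ

theorem ContinuousLinearMap.norm_le_of_extends {Y : Submodule 𝕜 E} {T : Y →L[𝕜] Y}
    {S : E →L[𝕜] E} (hS : ∀ y : Y, S y = T y) : ‖T‖ ≤ ‖S‖ :=
  T.opNorm_le_bound (norm_nonneg S) fun y => by
    rw [← Submodule.norm_coe (T y), ← hS y, ← Submodule.norm_coe y]
    exact S.le_opNorm y

end General

section SelfExtensible

variable {X : Type*} [NormedAddCommGroup X] [NormedSpace ℝ X]

theorem SelfExt.kSelfExt_one (hX : SelfExt X) : KSelfExt X 1 := fun Y hY T => by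
  obtain ⟨S, hS, hSn⟩ := hX Y hY T
  exact ⟨S, hS, by rw [hSn, one_mul]⟩

theorem KSelfExt.mono {k l : ℝ} (hX : KSelfExt X k) (hkl : k ≤ l) : KSelfExt X l :=
  fun Y hY T => by
    obtain ⟨S, hS, hSn⟩ := hX Y hY T
    exact ⟨S, hS, hSn.trans (by gcongr)⟩

theorem KSelfExt.selfExt_of_le_one {k : ℝ} (hX : KSelfExt X k) (hk : k ≤ 1) : SelfExt X :=
  fun Y hY T => by
    obtain ⟨S, hS, hSn⟩ := hX Y hY T
    refine ⟨S, hS, le_antisymm ?_ (ContinuousLinearMap.norm_le_of_extends hS)⟩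
    calc ‖S‖ ≤ k * ‖T‖ := hSn
      _ ≤ 1 * ‖T‖ := by gcongr
      _ = ‖T‖ := one_mul _

theorem KSelfExt.exists_extension_of_closed_in_closed {k : ℝ} (hX : KSelfExt X k)
    {Y : Submodule ℝ X} (hY : IsClosed (Y : Set X)) {Z : Submodule ℝ Y}
    (hZ : IsClosed (Z : Set Y)) (T : Z →L[ℝ] Z) :
    ∃ S : X →L[ℝ] X, (∀ z : Z, S (z : X) = (T z : X)) ∧ ‖S‖ ≤ k * ‖T‖ := by
  let e := Y.equivMapSubtypeₗᵢ Z
  let T' : Z.map Y.subtype →L[ℝ] Z.map Y.subtype :=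
    e.toLinearIsometry.toContinuousLinearMap.comp (T.comp (e.symm : Z.map Y.subtype →L[ℝ] Z))
  have hT' : ‖T'‖ = ‖T‖ := by
    rw [e.toLinearIsometry.norm_toContinuousLinearMap_comp]
    exact T.opNorm_comp_linearIsometryEquiv e.symm
  obtain ⟨S, hS, hSn⟩ := hX _ (Submodule.isClosed_map_subtype hY hZ) T'
  refine ⟨S, fun z => ?_, hT' ▸ hSn⟩
  simpa [T', e] using hS (e z)

theorem KSelfExt.of_retraction {k : ℝ} (hX : KSelfExt X k) {Y : Submodule ℝ X}
    (hY : IsClosed (Y : Set X)) (R : X →L[ℝ] Y) (hR : ∀ y : Y, R y = y) :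
    KSelfExt Y (‖R‖ * k) := fun Z hZ T => by
  obtain ⟨S, hS, hSn⟩ := hX.exists_extension_of_closed_in_closed hY hZ T
  refine ⟨R.comp (S.comp Y.subtypeL), fun z => ?_, ?_⟩
  · simp [hS z, hR]
  · calc ‖R.comp (S.comp Y.subtypeL)‖ ≤ ‖R‖ * (‖S‖ * ‖Y.subtypeL‖) :=
          (R.opNorm_comp_le _).trans (by gcongr; exact S.opNorm_comp_le _)
      _ ≤ ‖R‖ * (‖S‖ * 1) := by gcongr; exact Submodule.norm_subtypeL_le Y
      _ ≤ ‖R‖ * k * ‖T‖ := by rw [mul_one, mul_assoc]; gcongr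

end SelfExtensible

theorem kSelfExt_of_complemented_general (X : Type*) [NormedAddCommGroup X] [NormedSpace ℝ X]
    (k q : ℝ) (hk : 1 ≤ k)
    (P : X →L[ℝ] X) (hP : ∀ x, P (P x) = P x) (hPnorm : ‖P‖ ≤ q)
    (hclosed : IsClosed ((LinearMap.range (P : X →ₗ[ℝ] X) : Submodule ℝ X) : Set X)) :
    (KSelfExt X k → KSelfExt ↥(LinearMap.range (P : X →ₗ[ℝ] X)) (q * k)) ∧
      (SelfExt X → ‖P‖ ≤ 1 → SelfExt ↥(LinearMap.range (P : X →ₗ[ℝ] X))) := by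
  set Y := LinearMap.range (P : X →ₗ[ℝ] X)
  let R : X →L[ℝ] Y := P.codRestrict Y fun x => LinearMap.mem_range_self _ x
  have hR : ∀ y : Y, R y = y := by
    rintro ⟨_, x, rfl⟩
    exact Subtype.ext (hP x)
  have hRP : ‖R‖ ≤ ‖P‖ := R.opNorm_le_bound (norm_nonneg P) fun x => P.le_opNorm x
  refine ⟨fun hX => (hX.of_retraction hclosed R hR).mono ?_, fun hX hP1 => ?_⟩
  · exact mul_le_mul_of_nonneg_right (hRP.trans hPnorm) (by linarith)
  · exact (hX.kSelfExt_one.of_retraction hclosed R hR).selfExt_of_le_one (by linarith)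

/-- If `P : X → X` is a continuous linear projection with `‖P‖ ≤ q` and closed range `Y`, and
`X` is `k`-self-extensible, then `Y` (with the inherited norm) is `q·k`-self-extensible.
In particular, if `X` has the self-extension property and `‖P‖ ≤ 1`, then so does `Y`. -/
theorem kSelfExt_of_complemented (X : Type*) [NormedAddCommGroup X] [NormedSpace ℝ X]
    [CompleteSpace X] (k q : ℝ) (hk : 1 ≤ k) (hq : 1 ≤ q)
    (P : X →L[ℝ] X) (hP : ∀ x, P (P x) = P x) (hPnorm : ‖P‖ ≤ q)
    (hclosed : IsClosed ((LinearMap.range (P : X →ₗ[ℝ] X) : Submodule ℝ X) : Set X)) :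
    (KSelfExt X k → KSelfExt ↥(LinearMap.range (P : X →ₗ[ℝ] X)) (q * k)) ∧
      (SelfExt X → ‖P‖ ≤ 1 → SelfExt ↥(LinearMap.range (P : X →ₗ[ℝ] X))) :=
  kSelfExt_of_complemented_general X k q hk P hP hPnorm hclosed
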